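/- Set θ̌_F = √3, θ̌_O = √(1 + √2), θ̌_N = √5. For every ℓ̌ > 0 one has Ľ_⋆(ℓ̌, 0) = ℓ̌ for each ⋆ ∈ {F, O, N}, and for each ⋆ ∈ {F, O, N}: Ľ_⋆(ℓ̌, 0) < Ľ_⋆(ℓ̌, λ̌(ℓ̌)) whenever 0 < ℓ̌ < θ̌_⋆, Ľ_⋆(θ̌_⋆, 0) = Ľ_⋆(θ̌_⋆, λ̌(θ̌_⋆)), and Ľ_⋆(ℓ̌, 0) > Ľ_⋆(ℓ̌, λ̌(ℓ̌)) whenever ℓ̌ > θ̌_⋆. Moreover the corresponding optimal thresholds are λ̌(θ̌_F) = 4/√3, λ̌(θ̌_O) = √(2(1 + √2)), and λ̌(θ̌_N) = 6/√5. -/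

import Mathlib

/-- The 2×2 pivot matrix M(ℓ,ϑ,c,s) = A − B with A = diag(ℓ,0), B = ϑ·[[c²,cs],[cs,s²]]. -/
noncomputable def pivotM (l θ c s : ℝ) : Matrix (Fin 2) (Fin 2) ℝ :=
  !![l - θ * c ^ 2, -(θ * c * s); -(θ * c * s), -(θ * s ^ 2)]

/-- Frobenius norm: square root of the sum of squares of the entries. -/
noncomputable def frobNorm (A : Matrix (Fin 2) (Fin 2) ℝ) : ℝ :=
  Real.sqrt (∑ i, ∑ j, (A i j) ^ 2)

/-- Operator norm: the ℓ²→ℓ² operator norm, i.e. the largest singular value. -/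
noncomputable def opNorm (A : Matrix (Fin 2) (Fin 2) ℝ) : ℝ :=
  ‖LinearMap.toContinuousLinearMap (Matrix.toEuclideanLin A)‖

/-- The positive semidefinite square root of a positive semidefinite matrix
(restored with its definition from the older Mathlib, where it has since been removed). -/
noncomputable def Matrix.PosSemidef.sqrt {n 𝕜 : Type*} [Fintype n] [DecidableEq n] [RCLike 𝕜] [PartialOrder 𝕜]
    {A : Matrix n n 𝕜} (hA : A.PosSemidef) : Matrix n n 𝕜 :=
  (hA.1.eigenvectorUnitary : Matrix n n 𝕜) *
    Matrix.diagonal (fun i => ((Real.sqrt (hA.1.eigenvalues i) : ℝ) : 𝕜)) *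
    (star hA.1.eigenvectorUnitary : Matrix n n 𝕜)

/-- Nuclear norm: the trace of √(AᴴA), i.e. the sum of the singular values. -/
noncomputable def nucNorm (A : Matrix (Fin 2) (Fin 2) ℝ) : ℝ :=
  (Matrix.posSemidef_conjTranspose_mul_self A).sqrt.trace

/-- Limiting cosine č(ℓ̌) in the γ → 0 disproportional framework. -/
noncomputable def cCheck (l : ℝ) : ℝ := if 1 < l then Real.sqrt (1 - 1 / l ^ 2) else 0

/-- Limiting sine š(ℓ̌) = √(1 − č(ℓ̌)²). -/
noncomputable def sCheck (l : ℝ) : ℝ := Real.sqrt (1 - cCheck l ^ 2)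

/-- Eigenvalue mapping λ̌(ℓ̌) in the γ → 0 disproportional framework. -/
noncomputable def lamCheck (l : ℝ) : ℝ := if 1 < l then l + 1 / l else 2

/-- Asymptotic Frobenius loss Ľ_F(ℓ̌, ϑ). -/
noncomputable def lossCheckF (l θ : ℝ) : ℝ := frobNorm (pivotM l θ (cCheck l) (sCheck l))

/-- Asymptotic operator-norm loss Ľ_O(ℓ̌, ϑ). -/
noncomputable def lossCheckO (l θ : ℝ) : ℝ := opNorm (pivotM l θ (cCheck l) (sCheck l))

/-- Asymptotic nuclear-norm loss Ľ_N(ℓ̌, ϑ). -/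
noncomputable def lossCheckN (l θ : ℝ) : ℝ := nucNorm (pivotM l θ (cCheck l) (sCheck l))

open Matrix

/-! ### Generic norm computations for symmetric 2×2 matrices -/

lemma frob_eq (a b c : ℝ) : frobNorm !![a,b;b,c] = Real.sqrt (a^2+2*b^2+c^2) := by
  unfold frobNorm
  congr 1
  simp [Fin.sum_univ_two]
  ring

lemma quad_nonneg (A B C x y : ℝ) (hA : 0 ≤ A) (hC : 0 ≤ C) (h : B^2 ≤ A*C) :
    0 ≤ A*x^2 + 2*B*x*y + C*y^2 := by
  rcases eq_or_lt_of_le hA with h0 | h0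
  · have hB : B = 0 := by nlinarith
    subst hB
    nlinarith [mul_nonneg hC (sq_nonneg y), sq_nonneg x]
  · nlinarith [sq_nonneg (A*x+B*y), sq_nonneg y, mul_nonneg (mul_nonneg h0.le h0.le) (sq_nonneg x)]

lemma euc_norm_sq (y : EuclideanSpace ℝ (Fin 2)) : ‖y‖^2 = (y 0)^2 + (y 1)^2 := by
  rw [EuclideanSpace.norm_eq, Real.sq_sqrt (by positivity)]
  simp [Fin.sum_univ_two, sq_abs]

lemma opNorm_eq (a b c σ : ℝ) (hσ : 0 ≤ σ)
    (hub : ∀ x y : ℝ, (a*x+b*y)^2+(b*x+c*y)^2 ≤ σ^2*(x^2+y^2))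
    (v₁ v₂ : ℝ) (hv : v₁ ≠ 0 ∨ v₂ ≠ 0)
    (heq : (a*v₁+b*v₂)^2+(b*v₁+c*v₂)^2 = σ^2*(v₁^2+v₂^2)) :
    opNorm !![a,b;b,c] = σ := by
  unfold opNorm
  set f := LinearMap.toContinuousLinearMap (Matrix.toEuclideanLin !![a,b;b,c]) with hf
  have happ : ∀ x : EuclideanSpace ℝ (Fin 2),
      ‖f x‖^2 = (a * x 0 + b * x 1)^2 + (b * x 0 + c * x 1)^2 := by
    intro x
    rw [hf, LinearMap.coe_toContinuousLinearMap', Matrix.toEuclideanLin_apply, euc_norm_sq]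
    simp [Matrix.mulVec, dotProduct, Fin.sum_univ_two, Matrix.vecHead, Matrix.vecTail]
  apply le_antisymm
  · apply ContinuousLinearMap.opNorm_le_bound _ hσ
    intro x
    have h3 : ‖f x‖^2 ≤ (σ * ‖x‖)^2 := by
      rw [happ x, mul_pow, euc_norm_sq]; exact hub (x 0) (x 1)
    exact (abs_le_of_sq_le_sq' h3 (by positivity)).2
  · set v : EuclideanSpace ℝ (Fin 2) := (WithLp.equiv 2 (Fin 2 → ℝ)).symm ![v₁, v₂] with hvdef
    have hv0 : v 0 = v₁ := rfl
    have hv1 : v 1 = v₂ := rfl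
    have hnv : 0 < ‖v‖ := by
      rw [norm_pos_iff]
      intro h
      rcases hv with h1 | h1
      · exact h1 (by rw [← hv0, h]; rfl)
      · exact h1 (by rw [← hv1, h]; rfl)
    have h4 : ‖f v‖ = σ * ‖v‖ := by
      have h5 : ‖f v‖^2 = (σ * ‖v‖)^2 := by
        rw [happ v, hv0, hv1, mul_pow, euc_norm_sq, hv0, hv1]; exact heq
      nlinarith [norm_nonneg (f v), mul_nonneg hσ (norm_nonneg v)]
    have h6 := f.le_opNorm v
    rw [h4] at h6
    exact le_of_mul_le_mul_right h6 hnv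

open scoped MatrixOrder in
lemma psd_sqrt_eq (A S : Matrix (Fin 2) (Fin 2) ℝ) (hA : A.PosSemidef) (hS : S.PosSemidef)
    (h : S ^ 2 = A) : hA.sqrt = S := by
  have h1 : hA.sqrt = cfc Real.sqrt A := by
    rw [hA.1.cfc_eq, Matrix.IsHermitian.cfc, Unitary.conjStarAlgAut_apply]
    rfl
  rw [h1, ← cfcₙ_eq_cfc, ← CFC.sqrt_eq_real_sqrt A hA.nonneg]
  exact CFC.sqrt_unique (by rw [← h, sq]) hS.nonneg

lemma nucNorm_eq (a b c s : ℝ) (hs : 0 < s)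
    (h : a^2+2*b^2+c^2+2*|a*c-b^2| = s^2) :
    nucNorm !![a,b;b,c] = s := by
  set M : Matrix (Fin 2) (Fin 2) ℝ := !![a,b;b,c] with hM
  set d := |a*c-b^2| with hddef
  have hd0 : 0 ≤ d := abs_nonneg _
  have hd2 : d^2 = (a*c-b^2)^2 := sq_abs _
  set S : Matrix (Fin 2) (Fin 2) ℝ :=
    !![(a^2+b^2+d)/s, (a*b+b*c)/s; (a*b+b*c)/s, (b^2+c^2+d)/s] with hSdef
  have hQ : Mᴴ * M = !![a^2+b^2, a*b+b*c; a*b+b*c, b^2+c^2] := by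
    ext i j
    fin_cases i <;> fin_cases j <;>
      simp [hM, Matrix.mul_apply, Matrix.conjTranspose_apply, Fin.sum_univ_two,
        Matrix.vecHead, Matrix.vecTail] <;> ring
  have hSposd : S.PosSemidef := by
    refine Matrix.PosSemidef.of_dotProduct_mulVec_nonneg ?_ ?_
    · ext i j
      fin_cases i <;> fin_cases j <;> simp [hSdef, Matrix.conjTranspose_apply]
    · intro x
      have hform : (star x) ⬝ᵥ S.mulVec x
          = ((a^2+b^2+d)/s)*(x 0)^2 + 2*((a*b+b*c)/s)*(x 0)*(x 1) + ((b^2+c^2+d)/s)*(x 1)^2 := by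
        simp [dotProduct, Matrix.mulVec, Fin.sum_univ_two, hSdef]
        ring
      rw [hform]
      apply quad_nonneg
      · positivity
      · positivity
      · rw [div_pow, div_mul_div_comm, div_le_div_iff₀ (by positivity) (by positivity)]
        nlinarith [mul_nonneg hd0 (sq_nonneg (a+c)), sq_nonneg b, sq_nonneg s,
          mul_nonneg hd0 (sq_nonneg a), mul_nonneg hd0 (sq_nonneg c), mul_nonneg hd0 (sq_nonneg b),
          mul_pos hs hs]
  have hsq : S^2 = Mᴴ * M := by
    rw [hQ, pow_two]
    ext i j
    fin_cases i <;> fin_cases j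
    · simp [hSdef, Matrix.mul_apply, Fin.sum_univ_two, Matrix.vecHead, Matrix.vecTail]
      field_simp
      linear_combination (a^2+b^2)*h + hd2
    · simp [hSdef, Matrix.mul_apply, Fin.sum_univ_two, Matrix.vecHead, Matrix.vecTail]
      field_simp
      linear_combination (a*b+b*c)*h
    · simp [hSdef, Matrix.mul_apply, Fin.sum_univ_two, Matrix.vecHead, Matrix.vecTail]
      field_simp
      linear_combination (a*b+b*c)*h
    · simp [hSdef, Matrix.mul_apply, Fin.sum_univ_two, Matrix.vecHead, Matrix.vecTail]
      field_simp
      linear_combination (b^2+c^2)*h + hd2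
  have hsqrt := (psd_sqrt_eq _ S (Matrix.posSemidef_conjTranspose_mul_self M) hSposd hsq).symm
  unfold nucNorm
  rw [← hsqrt]
  have htr : S.trace = (a^2+b^2+d)/s + (b^2+c^2+d)/s := by
    simp [Matrix.trace, hSdef, Fin.sum_univ_two]
  rw [htr]
  field_simp
  linarith [h]

/-! ### The pivot matrix in the three regimes -/

lemma low_facts (l : ℝ) (hl : ¬ 1 < l) :
    cCheck l = 0 ∧ sCheck l = 1 ∧ lamCheck l = 2 := by
  refine ⟨if_neg hl, ?_, if_neg hl⟩
  rw [sCheck, cCheck, if_neg hl]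
  norm_num

lemma pivot_low (l θ : ℝ) (hl : ¬ 1 < l) :
    pivotM l θ (cCheck l) (sCheck l) = !![l, 0; 0, -θ] := by
  obtain ⟨hc, hs, -⟩ := low_facts l hl
  rw [pivotM, hc, hs]
  norm_num

lemma pivot_zero (l : ℝ) : pivotM l 0 (cCheck l) (sCheck l) = !![l, 0; 0, 0] := by
  rw [pivotM]; norm_num

lemma high_facts (l : ℝ) (hl : 1 < l) :
    cCheck l ^ 2 = 1 - 1/l^2 ∧ sCheck l ^ 2 = 1/l^2 ∧ lamCheck l = l + 1/l := by
  have l0 : (0:ℝ) < l := lt_trans one_pos hl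
  have h1 : (0:ℝ) ≤ 1 - 1/l^2 := by
    rw [sub_nonneg, div_le_one (by positivity)]
    nlinarith
  have hc : cCheck l ^ 2 = 1 - 1/l^2 := by
    rw [cCheck, if_pos hl, Real.sq_sqrt h1]
  refine ⟨hc, ?_, if_pos hl⟩
  rw [sCheck, hc, show (1 - (1-1/l^2)) = 1/l^2 by ring, Real.sq_sqrt (by positivity)]

lemma pivot_high (l : ℝ) (hl : 1 < l) :
    pivotM l (lamCheck l) (cCheck l) (sCheck l)
      = !![1/l^3, -((l+1/l) * cCheck l * sCheck l);
           -((l+1/l) * cCheck l * sCheck l), -((l^2+1)/l^3)] := by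
  have l0 : (0:ℝ) < l := lt_trans one_pos hl
  obtain ⟨hc, hs, hlam⟩ := high_facts l hl
  rw [pivotM, hlam]
  ext i j
  fin_cases i <;> fin_cases j <;>
    simp [Matrix.vecHead, Matrix.vecTail]
  · rw [hc]; field_simp; ring
  · rw [hs]; field_simp

lemma bb_sq (l : ℝ) (hl : 1 < l) :
    (-((l+1/l) * cCheck l * sCheck l))^2 = (l^2+1)^2*(l^2-1)/l^6 := by
  have l0 : (0:ℝ) < l := lt_trans one_pos hl
  obtain ⟨hc, hs, -⟩ := high_facts l hl
  rw [show (-((l+1/l) * cCheck l * sCheck l))^2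
      = (l+1/l)^2 * (cCheck l^2) * (sCheck l^2) by ring, hc, hs]
  field_simp

/-! ### Loss values -/

lemma lossF_zero (l : ℝ) (hl : 0 < l) : lossCheckF l 0 = l := by
  rw [lossCheckF, pivot_zero, frob_eq]
  rw [show l^2+2*0^2+0^2 = l^2 by ring, Real.sqrt_sq hl.le]

lemma lossO_zero (l : ℝ) (hl : 0 < l) : lossCheckO l 0 = l := by
  rw [lossCheckO, pivot_zero]
  refine opNorm_eq l 0 0 l hl.le ?_ 1 0 (Or.inl one_ne_zero) (by ring)
  intro x y
  nlinarith [mul_nonneg (mul_pos hl hl).le (sq_nonneg y)]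

lemma lossN_zero (l : ℝ) (hl : 0 < l) : lossCheckN l 0 = l := by
  rw [lossCheckN, pivot_zero]
  apply nucNorm_eq l 0 0 l hl
  norm_num

lemma lossF_low (l : ℝ) (hl : ¬ 1 < l) :
    lossCheckF l (lamCheck l) = Real.sqrt (l^2 + 4) := by
  rw [lossCheckF, (low_facts l hl).2.2, pivot_low l 2 hl, frob_eq]
  norm_num

lemma lossO_low (l : ℝ) (h0 : 0 < l) (hl : ¬ 1 < l) :
    lossCheckO l (lamCheck l) = 2 := by
  rw [lossCheckO, (low_facts l hl).2.2, pivot_low l 2 hl]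
  push_neg at hl
  refine opNorm_eq l 0 (-2) 2 (by norm_num) ?_ 0 1 (Or.inr one_ne_zero) (by ring)
  intro x y
  nlinarith [mul_nonneg (by nlinarith : (0:ℝ) ≤ 4 - l^2) (sq_nonneg x)]

lemma lossN_low (l : ℝ) (h0 : 0 < l) (hl : ¬ 1 < l) :
    lossCheckN l (lamCheck l) = l + 2 := by
  rw [lossCheckN, (low_facts l hl).2.2, pivot_low l 2 hl]
  apply nucNorm_eq l 0 (-2) (l+2) (by linarith)
  rw [show l*(-2) - 0^2 = -(2*l) by ring, abs_neg, abs_of_pos (by linarith)]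
  ring

lemma lossF_high (l : ℝ) (hl : 1 < l) :
    lossCheckF l (lamCheck l) = Real.sqrt ((2*l^2+3)/l^2) := by
  have l0 : (0:ℝ) < l := lt_trans one_pos hl
  rw [lossCheckF, pivot_high l hl, frob_eq]
  congr 1
  rw [show (1/l^3)^2 + 2*(-((l+1/l) * cCheck l * sCheck l))^2 + (-((l^2+1)/l^3))^2
      = (1/l^3)^2 + 2*((-((l+1/l) * cCheck l * sCheck l))^2) + ((l^2+1)/l^3)^2 by ring,
    bb_sq l hl]
  field_simp
  ring

set_option maxHeartbeats 1000000 in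
lemma lossO_high (l : ℝ) (hl : 1 < l) :
    lossCheckO l (lamCheck l) = (Real.sqrt (4*l^2+5) + 1)/(2*l) := by
  have l0 : (0:ℝ) < l := lt_trans one_pos hl
  set r := Real.sqrt (4*l^2+5) with hrdef
  have hr2 : r^2 = 4*l^2+5 := Real.sq_sqrt (by positivity)
  have hr0 : 0 < r := Real.sqrt_pos.mpr (by positivity)
  rw [lossCheckO, pivot_high l hl]
  set bb := -((l+1/l) * cCheck l * sCheck l) with hbbdef
  have hbb2 : bb^2 = (l^2+1)^2*(l^2-1)/l^6 := bb_sq l hl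
  have hr_lb : l^2 + 2 ≤ l^2 * r := by
    have key : (l^2*r - l^2 - 2)*(l^2*r + l^2 + 2) = 4*(l^2-1)*(l^2+1)^2 := by
      linear_combination l^4*hr2
    have hpos : 0 < l^2*r + l^2 + 2 := by positivity
    have hrhs : (0:ℝ) ≤ 4*(l^2-1)*(l^2+1)^2 :=
      mul_nonneg (by nlinarith : (0:ℝ) ≤ 4*(l^2-1)) (sq_nonneg (l^2+1))
    nlinarith [key, hpos, hrhs]
  have hAval : ((r+1)/(2*l))^2 - (1/l^3)^2 - ((l^2+1)^2*(l^2-1)/l^6) = (l^2+2+l^2*r)/(2*l^4) := by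
    field_simp
    linear_combination l^4 * hr2
  have hCval : ((r+1)/(2*l))^2 - ((l^2+1)^2*(l^2-1)/l^6) - (-((l^2+1)/l^3))^2
      = (l^2*r - l^2 - 2)/(2*l^4) := by
    field_simp
    linear_combination l^4 * hr2
  have hA : 0 ≤ ((r+1)/(2*l))^2 - (1/l^3)^2 - bb^2 := by
    rw [hbb2, hAval]
    positivity
  have hC : 0 ≤ ((r+1)/(2*l))^2 - bb^2 - (-((l^2+1)/l^3))^2 := by
    rw [hbb2, hCval]
    have : 0 ≤ l^2*r - l^2 - 2 := by linarith
    positivity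
  have hB : (-(bb*((1/l^3) + (-((l^2+1)/l^3)))))^2
      ≤ (((r+1)/(2*l))^2 - (1/l^3)^2 - bb^2) * (((r+1)/(2*l))^2 - bb^2 - (-((l^2+1)/l^3))^2) := by
    rw [show (-(bb*((1/l^3) + (-((l^2+1)/l^3)))))^2 = bb^2*((1/l^3) - (l^2+1)/l^3)^2 by ring,
      hbb2, hAval, hCval]
    apply le_of_eq
    field_simp
    linear_combination (-(l^8)) * hr2
  have hchar : (-((r+1)/(2*l)))^2 - ((1/l^3) + (-((l^2+1)/l^3)))*(-((r+1)/(2*l)))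
      + ((1/l^3)*(-((l^2+1)/l^3)) - bb^2) = 0 := by
    rw [hbb2]
    field_simp
    linear_combination l^4 * hr2
  refine opNorm_eq _ _ _ _ (by positivity) ?_ bb (-((r+1)/(2*l)) - 1/l^3) ?_ ?_
  · intro x y
    have key := quad_nonneg (((r+1)/(2*l))^2 - (1/l^3)^2 - bb^2)
      (-(bb*((1/l^3) + (-((l^2+1)/l^3)))))
      (((r+1)/(2*l))^2 - bb^2 - (-((l^2+1)/l^3))^2) x y hA hC hB
    have e : ((r+1)/(2*l))^2*(x^2+y^2) - (((1/l^3)*x+bb*y)^2+(bb*x+(-((l^2+1)/l^3))*y)^2)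
        = (((r+1)/(2*l))^2 - (1/l^3)^2 - bb^2)*x^2
          + 2*(-(bb*((1/l^3) + (-((l^2+1)/l^3)))))*x*y
          + (((r+1)/(2*l))^2 - bb^2 - (-((l^2+1)/l^3))^2)*y^2 := by ring
    linarith [key, e]
  · refine Or.inr (show -((r+1)/(2*l)) - 1/l^3 ≠ 0 from ?_)
    have h1 : 0 < (r+1)/(2*l) := by positivity
    have h2 : 0 < 1/l^3 := by positivity
    intro h
    nlinarith
  · -- attainment
    have att : ∀ a b c lam : ℝ, lam^2 - (a+c)*lam + (a*c - b^2) = 0 →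
        (a*b + b*(lam - a))^2 + (b*b + c*(lam - a))^2 = lam^2*(b^2 + (lam-a)^2) := by
      intro a b c lam hch
      linear_combination (-(b*b + c*(lam-a) + lam*(lam-a))) * hch
    have key := att (1/l^3) bb (-((l^2+1)/l^3)) (-((r+1)/(2*l))) hchar
    linear_combination key

lemma lossN_high (l : ℝ) (hl : 1 < l) :
    lossCheckN l (lamCheck l) = Real.sqrt (4*l^2+5)/l := by
  have l0 : (0:ℝ) < l := lt_trans one_pos hl
  set r := Real.sqrt (4*l^2+5) with hrdef
  have hr2 : r^2 = 4*l^2+5 := Real.sq_sqrt (by positivity)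
  have hr0 : 0 < r := Real.sqrt_pos.mpr (by positivity)
  rw [lossCheckN, pivot_high l hl]
  set bb := -((l+1/l) * cCheck l * sCheck l) with hbbdef
  have hbb2 : bb^2 = (l^2+1)^2*(l^2-1)/l^6 := bb_sq l hl
  apply nucNorm_eq _ _ _ _ (by positivity)
  have hD : (1/l^3)*(-((l^2+1)/l^3)) - bb^2 = -((l^2+1)/l^2) := by
    rw [hbb2]; field_simp; ring
  rw [hD, abs_neg, abs_of_pos (by positivity)]
  rw [show (1/l^3)^2 + 2*bb^2 + (-((l^2+1)/l^3))^2
      = (1/l^3)^2 + 2*(bb^2) + ((l^2+1)/l^3)^2 by ring, hbb2]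
  field_simp
  linear_combination (-(l^4)) * hr2

/-! ### Auxiliary square-root facts -/

lemma one_lt_sqrt {x : ℝ} (h : 1 < x) : 1 < Real.sqrt x := by
  rw [Real.lt_sqrt (by norm_num)]
  nlinarith

lemma sqrt2_sq : (Real.sqrt 2)^2 = 2 := Real.sq_sqrt (by norm_num)
lemma sqrt2_pos : (0:ℝ) < Real.sqrt 2 := Real.sqrt_pos.mpr (by norm_num)

/-! ### Comparison lemmas -/

lemma compF_lt (l : ℝ) (h0 : 0 < l) (hlt : l < Real.sqrt 3) :
    lossCheckF l 0 < lossCheckF l (lamCheck l) := by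
  rw [lossF_zero l h0]
  by_cases h1 : 1 < l
  · rw [lossF_high l h1, Real.lt_sqrt h0.le, lt_div_iff₀ (by positivity)]
    have h3 : l^2 < 3 := by
      rw [Real.lt_sqrt h0.le] at hlt; exact hlt
    nlinarith
  · rw [lossF_low l h1, Real.lt_sqrt h0.le]
    nlinarith

lemma compF_eq : lossCheckF (Real.sqrt 3) 0 = lossCheckF (Real.sqrt 3) (lamCheck (Real.sqrt 3)) := by
  have h1 : (1:ℝ) < Real.sqrt 3 := one_lt_sqrt (by norm_num)
  have h0 : (0:ℝ) < Real.sqrt 3 := lt_trans one_pos h1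
  have h3 : (Real.sqrt 3)^2 = 3 := Real.sq_sqrt (by norm_num)
  rw [lossF_zero _ h0, lossF_high _ h1, h3]
  norm_num

lemma compF_gt (l : ℝ) (hgt : Real.sqrt 3 < l) :
    lossCheckF l (lamCheck l) < lossCheckF l 0 := by
  have h1 : 1 < l := lt_trans (one_lt_sqrt (by norm_num)) hgt
  have h0 : 0 < l := lt_trans one_pos h1
  have h3 : 3 < l^2 := by
    rw [Real.sqrt_lt' h0] at hgt; exact hgt
  rw [lossF_zero l h0, lossF_high l h1, Real.sqrt_lt' h0, div_lt_iff₀ (by positivity)]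
  nlinarith

lemma compO_lt (l : ℝ) (h0 : 0 < l) (hlt : l < Real.sqrt (1 + Real.sqrt 2)) :
    lossCheckO l 0 < lossCheckO l (lamCheck l) := by
  rw [lossO_zero l h0]
  by_cases h1 : 1 < l
  · rw [lossO_high l h1]
    have h2 : l^2 < 1 + Real.sqrt 2 := by rw [Real.lt_sqrt h0.le] at hlt; exact hlt
    have hkey : 2*l^2 - 1 < Real.sqrt (4*l^2+5) := by
      rw [Real.lt_sqrt (by nlinarith)]
      have h4 : l^2 - 1 < Real.sqrt 2 := by linarith
      have h5 : (0:ℝ) ≤ l^2 - 1 := by nlinarith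
      nlinarith [sqrt2_sq, mul_self_lt_mul_self h5 h4]
    rw [lt_div_iff₀ (by positivity)]
    nlinarith
  · rw [lossO_low l h0 h1]
    push_neg at h1
    linarith

lemma compO_eq : lossCheckO (Real.sqrt (1 + Real.sqrt 2)) 0
    = lossCheckO (Real.sqrt (1 + Real.sqrt 2)) (lamCheck (Real.sqrt (1 + Real.sqrt 2))) := by
  set t := Real.sqrt (1 + Real.sqrt 2) with ht
  have h1 : (1:ℝ) < t := one_lt_sqrt (by nlinarith [sqrt2_pos])
  have h0 : (0:ℝ) < t := lt_trans one_pos h1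
  have ht2 : t^2 = 1 + Real.sqrt 2 := Real.sq_sqrt (by positivity)
  have hr : Real.sqrt (4*t^2+5) = 1 + 2*Real.sqrt 2 := by
    rw [ht2, show (4*(1+Real.sqrt 2)+5 : ℝ) = (1+2*Real.sqrt 2)^2 by nlinarith [sqrt2_sq]]
    exact Real.sqrt_sq (by positivity)
  rw [lossO_zero _ h0, lossO_high _ h1, hr, eq_div_iff (by positivity)]
  nlinarith [sqrt2_sq]

lemma compO_gt (l : ℝ) (hgt : Real.sqrt (1 + Real.sqrt 2) < l) :
    lossCheckO l (lamCheck l) < lossCheckO l 0 := by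
  have h1 : 1 < l := lt_trans (one_lt_sqrt (by nlinarith [sqrt2_pos])) hgt
  have h0 : 0 < l := lt_trans one_pos h1
  have h2 : 1 + Real.sqrt 2 < l^2 := by
    rw [Real.sqrt_lt' h0] at hgt; exact hgt
  rw [lossO_zero l h0, lossO_high l h1]
  have hkey : Real.sqrt (4*l^2+5) < 2*l^2 - 1 := by
    rw [Real.sqrt_lt' (by nlinarith [sqrt2_pos])]
    have h4 : Real.sqrt 2 < l^2 - 1 := by linarith
    nlinarith [sqrt2_sq, mul_self_lt_mul_self (Real.sqrt_nonneg 2) h4]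
  rw [div_lt_iff₀ (by positivity)]
  nlinarith

lemma compN_lt (l : ℝ) (h0 : 0 < l) (hlt : l < Real.sqrt 5) :
    lossCheckN l 0 < lossCheckN l (lamCheck l) := by
  rw [lossN_zero l h0]
  by_cases h1 : 1 < l
  · rw [lossN_high l h1, lt_div_iff₀ h0]
    have h2 : l^2 < 5 := by rw [Real.lt_sqrt h0.le] at hlt; exact hlt
    rw [show l*l = l^2 by ring, Real.lt_sqrt (by positivity)]
    nlinarith
  · rw [lossN_low l h0 h1]
    linarith

lemma compN_eq : lossCheckN (Real.sqrt 5) 0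
    = lossCheckN (Real.sqrt 5) (lamCheck (Real.sqrt 5)) := by
  have h1 : (1:ℝ) < Real.sqrt 5 := one_lt_sqrt (by norm_num)
  have h0 : (0:ℝ) < Real.sqrt 5 := lt_trans one_pos h1
  have h5 : (Real.sqrt 5)^2 = 5 := Real.sq_sqrt (by norm_num)
  have hr : Real.sqrt (4*(Real.sqrt 5)^2+5) = 5 := by
    rw [h5, show (4*(5:ℝ)+5) = 5^2 by norm_num]
    exact Real.sqrt_sq (by norm_num)
  rw [lossN_zero _ h0, lossN_high _ h1, hr, eq_div_iff (by positivity)]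
  nlinarith [h5]

lemma compN_gt (l : ℝ) (hgt : Real.sqrt 5 < l) :
    lossCheckN l (lamCheck l) < lossCheckN l 0 := by
  have h1 : 1 < l := lt_trans (one_lt_sqrt (by norm_num)) hgt
  have h0 : 0 < l := lt_trans one_pos h1
  have h2 : 5 < l^2 := by rw [Real.sqrt_lt' h0] at hgt; exact hgt
  rw [lossN_zero l h0, lossN_high l h1, div_lt_iff₀ h0, show l*l = l^2 by ring,
    Real.sqrt_lt' (by positivity)]
  nlinarith

/-! ### Threshold values -/

lemma lamF_val : lamCheck (Real.sqrt 3) = 4 / Real.sqrt 3 := by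
  have h1 : (1:ℝ) < Real.sqrt 3 := one_lt_sqrt (by norm_num)
  have h0 : (0:ℝ) < Real.sqrt 3 := lt_trans one_pos h1
  have h3 : (Real.sqrt 3)^2 = 3 := Real.sq_sqrt (by norm_num)
  rw [lamCheck, if_pos h1]
  field_simp
  nlinarith [h3]

lemma lamO_val : lamCheck (Real.sqrt (1 + Real.sqrt 2))
    = Real.sqrt (2 * (1 + Real.sqrt 2)) := by
  set t := Real.sqrt (1 + Real.sqrt 2) with ht
  have h1 : (1:ℝ) < t := one_lt_sqrt (by nlinarith [sqrt2_pos])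
  have h0 : (0:ℝ) < t := lt_trans one_pos h1
  have ht2 : t^2 = 1 + Real.sqrt 2 := Real.sq_sqrt (by positivity)
  rw [lamCheck, if_pos h1]
  have hsq : (t + 1/t)^2 = 2 * (1 + Real.sqrt 2) := by
    have h2 : (1 + Real.sqrt 2) * (Real.sqrt 2 - 1) = 1 := by nlinarith [sqrt2_sq]
    field_simp
    nlinarith [ht2, sqrt2_sq]
  rw [← hsq, Real.sqrt_sq (by positivity)]

lemma lamN_val : lamCheck (Real.sqrt 5) = 6 / Real.sqrt 5 := by
  have h1 : (1:ℝ) < Real.sqrt 5 := one_lt_sqrt (by norm_num)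
  have h0 : (0:ℝ) < Real.sqrt 5 := lt_trans one_pos h1
  have h5 : (Real.sqrt 5)^2 = 5 := Real.sq_sqrt (by norm_num)
  rw [lamCheck, if_pos h1]
  field_simp
  nlinarith [h5]


theorem optimal_hard_thresholds_check :
    (∀ l : ℝ, 0 < l → lossCheckF l 0 = l ∧ lossCheckO l 0 = l ∧ lossCheckN l 0 = l) ∧
    -- Frobenius: crossing at θ̌_F = √3
    (∀ l : ℝ, 0 < l → l < Real.sqrt 3 → lossCheckF l 0 < lossCheckF l (lamCheck l)) ∧
    lossCheckF (Real.sqrt 3) 0 = lossCheckF (Real.sqrt 3) (lamCheck (Real.sqrt 3)) ∧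
    (∀ l : ℝ, Real.sqrt 3 < l → lossCheckF l (lamCheck l) < lossCheckF l 0) ∧
    -- Operator: crossing at θ̌_O = √(1 + √2)
    (∀ l : ℝ, 0 < l → l < Real.sqrt (1 + Real.sqrt 2) →
      lossCheckO l 0 < lossCheckO l (lamCheck l)) ∧
    lossCheckO (Real.sqrt (1 + Real.sqrt 2)) 0
      = lossCheckO (Real.sqrt (1 + Real.sqrt 2)) (lamCheck (Real.sqrt (1 + Real.sqrt 2))) ∧
    (∀ l : ℝ, Real.sqrt (1 + Real.sqrt 2) < l →
      lossCheckO l (lamCheck l) < lossCheckO l 0) ∧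
    -- Nuclear: crossing at θ̌_N = √5
    (∀ l : ℝ, 0 < l → l < Real.sqrt 5 → lossCheckN l 0 < lossCheckN l (lamCheck l)) ∧
    lossCheckN (Real.sqrt 5) 0 = lossCheckN (Real.sqrt 5) (lamCheck (Real.sqrt 5)) ∧
    (∀ l : ℝ, Real.sqrt 5 < l → lossCheckN l (lamCheck l) < lossCheckN l 0) ∧
    -- optimal thresholds
    lamCheck (Real.sqrt 3) = 4 / Real.sqrt 3 ∧
    lamCheck (Real.sqrt (1 + Real.sqrt 2)) = Real.sqrt (2 * (1 + Real.sqrt 2)) ∧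
    lamCheck (Real.sqrt 5) = 6 / Real.sqrt 5 :=
  ⟨fun l hl => ⟨lossF_zero l hl, lossO_zero l hl, lossN_zero l hl⟩,
   compF_lt, compF_eq, compF_gt, compO_lt, compO_eq, compO_gt,
   compN_lt, compN_eq, compN_gt, lamF_val, lamO_val, lamN_val⟩
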